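/- For every parameter h ∈ [0, 1/2], the diffusion coefficient of the lifted V map exists and is the linear function lim_{n→∞} (1/(2n)) ∫_0^1 (V_h^n(x) − x)² dx = h. -/

import Mathlib

open Filter

/-- The lifted V map `V_h`. -/
noncomputable def liftV (h x : ℝ) : ℝ :=
  if Int.fract x < 1/2 then (⌊x⌋ : ℝ) + (-2 * Int.fract x + 1 + h)
  else (⌊x⌋ : ℝ) + (2 * Int.fract x - 1 - h)

/-!
`V_h` is the lift of a circle map preserving Lebesgue measure, and its displacement is a
coboundary plus the integer-valued observable `g x = ⌈V x - h⌉ - ⌈x - h⌉`, the signed number of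
points of `h + ℤ` crossed in one step:
`V^n x - x = ∑_{k<n} g (V^k x) + φ (V^n x) - φ x` with `φ y = y - ⌈y - h⌉ ∈ (h - 1, h]`.
For `h ≤ 1/2`, `g` is `1` on `(0, h)`, `-1` on `(1/2, 1/2 + h)` and `0` elsewhere in `(0, 1)`,
so its values at the two `V`-preimages of any point cancel: `∫ g · (u ∘ V) = 0` for every bounded
periodic `u`. Hence the `g ∘ V^k` are orthogonal in `L²[0, 1]`, the Birkhoff sum has second
moment `n ∫ g² = 2hn`, and the bounded remainder changes the second moment only by `O(√n)`.
-/

open MeasureTheory Set Function intervalIntegral Topology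

theorem birkhoffSum_coboundary {α G : Type*} [AddCommGroup G] (f : α → α) (ψ : α → G)
    (n : ℕ) (x : α) : birkhoffSum f (fun y => ψ (f y) - ψ y) n x = ψ (f^[n] x) - ψ x := by
  induction n with
  | zero => simp
  | succ n ih => rw [birkhoffSum_succ, ih, iterate_succ_apply']; abel

theorem tendsto_div_natCast_of_abs_sub_le_sqrt {a : ℕ → ℝ} {c C K : ℝ}
    (ha : ∀ n : ℕ, |a n - c * n| ≤ C * √n + K) : Tendsto (fun n => a n / n) atTop (𝓝 c) := by
  have hbound : Tendsto (fun n : ℕ => C * √(1 / n) + K * (1 / n)) atTop (𝓝 0) := by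
    simpa using (tendsto_one_div_atTop_nhds_zero_nat.sqrt.const_mul C).add
      (tendsto_one_div_atTop_nhds_zero_nat.const_mul K)
  rw [tendsto_iff_norm_sub_tendsto_zero]
  refine squeeze_zero' (.of_forall fun n => norm_nonneg _) ?_ hbound
  filter_upwards [eventually_gt_atTop 0] with n hn
  have hn : (0 : ℝ) < n := Nat.cast_pos.mpr hn
  have hsqrt : √(1 / n) * n = √n := by
    rw [Real.sqrt_div' _ hn.le, Real.sqrt_one, one_div_mul_eq_div, Real.div_sqrt]
  have hrescale : (C * √(1 / n) + K * (1 / n)) * n = C * √n + K := by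
    rw [add_mul, mul_assoc, hsqrt]
    field_simp
  rw [Real.norm_eq_abs, div_sub' hn.ne', abs_div, abs_of_pos hn, div_le_iff₀ hn, hrescale,
    mul_comm (n : ℝ) c]
  exact ha n

theorem abs_add_sq_sub_sq_le (a b : ℝ) {s : ℝ} (hs : 0 < s) :
    |(a + b) ^ 2 - a ^ 2| ≤ a ^ 2 / s + (s + 1) * b ^ 2 := by
  have amgm : 2 * |a| * |b| ≤ a ^ 2 / s + s * b ^ 2 := by
    have : a ^ 2 / s + s * b ^ 2 - 2 * |a| * |b| = (|a| - s * |b|) ^ 2 / s := by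
      field_simp
      rw [← sq_abs a, ← sq_abs b]
      ring
    linarith [div_nonneg (sq_nonneg (|a| - s * |b|)) hs.le]
  calc |(a + b) ^ 2 - a ^ 2| = |2 * a * b + b ^ 2| := by ring_nf
    _ ≤ 2 * |a| * |b| + b ^ 2 := by
      refine (abs_add_le _ _).trans ?_
      rw [abs_mul, abs_mul, abs_two, abs_sq]
    _ ≤ a ^ 2 / s + (s + 1) * b ^ 2 := by linarith

theorem abs_integral_add_sq_sub_le {S R : ℝ → ℝ} {a b : ℝ} (hab : a ≤ b)
    (hS : IntervalIntegrable (fun x => S x ^ 2) volume a b)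
    (hSR : IntervalIntegrable (fun x => (S x + R x) ^ 2) volume a b)
    {B : ℝ} (hR : ∀ x, |R x| ≤ B) {s : ℝ} (hs : 0 < s) :
    |(∫ x in a..b, (S x + R x) ^ 2) - ∫ x in a..b, S x ^ 2|
      ≤ (∫ x in a..b, S x ^ 2) / s + (b - a) * ((s + 1) * B ^ 2) := by
  have hB : ∀ x, R x ^ 2 ≤ B ^ 2 := fun x => sq_le_sq' (abs_le.mp (hR x)).1 (abs_le.mp (hR x)).2
  rw [← integral_sub hSR hS]
  calc |∫ x in a..b, ((S x + R x) ^ 2 - S x ^ 2)|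
      ≤ ∫ x in a..b, |(S x + R x) ^ 2 - S x ^ 2| := abs_integral_le_integral_abs hab
    _ ≤ ∫ x in a..b, (S x ^ 2 / s + (s + 1) * B ^ 2) := by
      refine integral_mono_on hab (hSR.sub hS).abs
        ((hS.div_const s).add intervalIntegrable_const) fun x _ => ?_
      calc |(S x + R x) ^ 2 - S x ^ 2| ≤ S x ^ 2 / s + (s + 1) * R x ^ 2 :=
            abs_add_sq_sub_sq_le _ _ hs
        _ ≤ S x ^ 2 / s + (s + 1) * B ^ 2 := by nlinarith [hB x]
    _ = _ := by
      rw [integral_add (hS.div_const s) intervalIntegrable_const, intervalIntegral.integral_div,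
        intervalIntegral.integral_const, smul_eq_mul]

section LiftV

variable {h : ℝ}

theorem liftV_add_one (h x : ℝ) : liftV h (x + 1) = liftV h x + 1 := by
  simp only [liftV, Int.fract_add_one, Int.floor_add_one]
  split <;> push_cast <;> ring

theorem iterate_liftV_add_one (h : ℝ) (n : ℕ) (x : ℝ) :
    (liftV h)^[n] (x + 1) = (liftV h)^[n] x + 1 :=
  (Commute.iterate_left (f := liftV h) (g := (· + 1)) (liftV_add_one h) n).eq x

theorem liftV_of_lt_half {x : ℝ} (hx₀ : 0 ≤ x) (hx : x < 1 / 2) : liftV h x = 1 + h - 2 * x := by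
  have hfloor : ⌊x⌋ = 0 := Int.floor_eq_zero_iff.mpr ⟨hx₀, by linarith⟩
  rw [liftV, Int.fract, hfloor, if_pos (by simpa using hx)]
  push_cast; ring

theorem liftV_of_half_le {x : ℝ} (hx : 1 / 2 ≤ x) (hx₁ : x < 1) : liftV h x = 2 * x - 1 - h := by
  have hfloor : ⌊x⌋ = 0 := Int.floor_eq_zero_iff.mpr ⟨by linarith, hx₁⟩
  rw [liftV, Int.fract, hfloor, if_neg (by simpa using hx.not_gt)]
  push_cast; ring

theorem measurable_liftV (h : ℝ) : Measurable (liftV h) :=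
  Measurable.ite (measurableSet_lt measurable_fract measurable_const) (by fun_prop) (by fun_prop)

theorem abs_liftV_sub_self_le (h x : ℝ) : |liftV h x - x| ≤ 1 + |h| := by
  have hfloor : (⌊x⌋ : ℝ) = x - Int.fract x := by rw [Int.self_sub_fract]
  have := Int.fract_nonneg x
  have := Int.fract_lt_one x
  rw [liftV, hfloor, abs_le]
  split_ifs <;> constructor <;> linarith [le_abs_self h, neg_abs_le h]

end LiftV

structure IsCircleObservable (w : ℝ → ℝ) : Prop where
  measurable : Measurable w
  periodic : Periodic w 1
  bounded : ∃ C, ∀ x, |w x| ≤ C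

namespace IsCircleObservable

variable {w u : ℝ → ℝ}

theorem intervalIntegrable (hw : IsCircleObservable w) (a b : ℝ) :
    IntervalIntegrable w volume a b := by
  obtain ⟨C, hC⟩ := hw.bounded
  refine ⟨?_, ?_⟩ <;> exact Integrable.of_bound hw.measurable.aestronglyMeasurable C
    (ae_of_all _ fun x => (Real.norm_eq_abs _).trans_le (hC x))

theorem add (hw : IsCircleObservable w) (hu : IsCircleObservable u) :
    IsCircleObservable fun x => w x + u x := by
  obtain ⟨C, hC⟩ := hw.bounded
  obtain ⟨D, hD⟩ := hu.bounded
  exact ⟨hw.measurable.add hu.measurable, hw.periodic.add hu.periodic,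
    C + D, fun x => (abs_add_le _ _).trans (add_le_add (hC x) (hD x))⟩

theorem sub (hw : IsCircleObservable w) (hu : IsCircleObservable u) :
    IsCircleObservable fun x => w x - u x := by
  obtain ⟨C, hC⟩ := hw.bounded
  obtain ⟨D, hD⟩ := hu.bounded
  exact ⟨hw.measurable.sub hu.measurable, hw.periodic.sub hu.periodic,
    C + D, fun x => (abs_sub _ _).trans (add_le_add (hC x) (hD x))⟩

theorem mul (hw : IsCircleObservable w) (hu : IsCircleObservable u) :
    IsCircleObservable fun x => w x * u x := by
  obtain ⟨C, hC⟩ := hw.bounded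
  obtain ⟨D, hD⟩ := hu.bounded
  refine ⟨hw.measurable.mul hu.measurable, hw.periodic.mul hu.periodic, C * D, fun x => ?_⟩
  rw [abs_mul]
  exact mul_le_mul (hC x) (hD x) (abs_nonneg _) ((abs_nonneg _).trans (hC x))

theorem sq (hw : IsCircleObservable w) : IsCircleObservable fun x => w x ^ 2 := by
  simpa only [pow_two] using hw.mul hw

theorem comp_iterate_liftV (hw : IsCircleObservable w) (h : ℝ) (n : ℕ) :
    IsCircleObservable fun x => w ((liftV h)^[n] x) := by
  obtain ⟨C, hC⟩ := hw.bounded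
  refine ⟨hw.measurable.comp ((measurable_liftV h).iterate n), fun x => ?_, C, fun x => hC _⟩
  simp only [iterate_liftV_add_one, hw.periodic _]

theorem comp_liftV (hw : IsCircleObservable w) (h : ℝ) :
    IsCircleObservable fun x => w (liftV h x) := by
  simpa using hw.comp_iterate_liftV h 1

theorem birkhoffSum_liftV (hw : IsCircleObservable w) (h : ℝ) (n : ℕ) :
    IsCircleObservable (birkhoffSum (liftV h) w n) := by
  induction n with
  | zero => exact ⟨measurable_const, fun _ => rfl, 0, fun _ => by simp⟩
  | succ n ih =>
    rw [show birkhoffSum (liftV h) w (n + 1) = _ from funext (birkhoffSum_succ _ _ n)]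
    exact ih.add (hw.comp_iterate_liftV h n)

end IsCircleObservable

theorem integral_comp_liftV {w : ℝ → ℝ} (hw : IsCircleObservable w) (h : ℝ) :
    ∫ x in (0 : ℝ)..1, w (liftV h x) = ∫ x in (0 : ℝ)..1, w x := by
  have hwV := (hw.comp_liftV h).intervalIntegrable
  have left : ∫ x in (0 : ℝ)..1 / 2, w (liftV h x) = (∫ x in (0 : ℝ)..1, w x) / 2 := by
    calc ∫ x in (0 : ℝ)..1 / 2, w (liftV h x) = ∫ x in (0 : ℝ)..1 / 2, w (-2 * x + (1 + h)) :=
          integral_congr_Ioo_of_le (by norm_num) fun x hx => by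
            rw [liftV_of_lt_half hx.1.le hx.2]
            congr 1; ring
      _ = (∫ x in h..h + 1, w x) / 2 := by
          rw [integral_comp_mul_add w (by norm_num), integral_symm, smul_eq_mul,
            show (-2 : ℝ) * 0 + (1 + h) = h + 1 by ring,
            show (-2 : ℝ) * (1 / 2) + (1 + h) = h by ring]
          ring
      _ = (∫ x in (0 : ℝ)..1, w x) / 2 := by
          rw [hw.periodic.intervalIntegral_add_eq h 0, zero_add]
  have right : ∫ x in (1 / 2 : ℝ)..1, w (liftV h x) = (∫ x in (0 : ℝ)..1, w x) / 2 := by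
    calc ∫ x in (1 / 2 : ℝ)..1, w (liftV h x) = ∫ x in (1 / 2 : ℝ)..1, w (2 * x + (-1 - h)) :=
          integral_congr_Ioo_of_le (by norm_num) fun x hx => by
            rw [liftV_of_half_le hx.1.le hx.2]
            congr 1; ring
      _ = (∫ x in -h..-h + 1, w x) / 2 := by
          rw [integral_comp_mul_add w (by norm_num), smul_eq_mul,
            show (2 : ℝ) * (1 / 2) + (-1 - h) = -h by ring,
            show (2 : ℝ) * 1 + (-1 - h) = -h + 1 by ring]
          ring
      _ = (∫ x in (0 : ℝ)..1, w x) / 2 := by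
          rw [hw.periodic.intervalIntegral_add_eq (-h) 0, zero_add]
  rw [← integral_add_adjacent_intervals (hwV 0 (1 / 2)) (hwV (1 / 2) 1), left, right]
  ring

theorem integral_comp_iterate_liftV {w : ℝ → ℝ} (hw : IsCircleObservable w) (h : ℝ) (n : ℕ) :
    ∫ x in (0 : ℝ)..1, w ((liftV h)^[n] x) = ∫ x in (0 : ℝ)..1, w x := by
  induction n with
  | zero => simp
  | succ n ih =>
    simp only [iterate_succ_apply]
    exact (integral_comp_liftV (hw.comp_iterate_liftV h n) h).trans ih

noncomputable def liftVJump (h x : ℝ) : ℝ := ⌈liftV h x - h⌉ - ⌈x - h⌉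

theorem sub_ceil_sub_mem_Ioc (h y : ℝ) : y - ⌈y - h⌉ ∈ Ioc (h - 1) h := by
  constructor <;> linarith [Int.le_ceil (y - h), Int.ceil_lt_add_one (y - h)]

theorem isCircleObservable_sub_ceil_sub (h : ℝ) :
    IsCircleObservable fun y => y - ⌈y - h⌉ := by
  refine ⟨by fun_prop, fun y => ?_, 1 + |h|, fun y => ?_⟩
  · rw [show y + 1 - h = y - h + 1 by ring, Int.ceil_add_one]
    push_cast; ring
  · obtain ⟨hlo, hhi⟩ := sub_ceil_sub_mem_Ioc h y
    rw [abs_le]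
    constructor <;> linarith [le_abs_self h, neg_abs_le h]

theorem isCircleObservable_liftVJump (h : ℝ) : IsCircleObservable (liftVJump h) := by
  have hV := measurable_liftV h
  refine ⟨by unfold liftVJump; fun_prop, fun x => ?_, 2 + |h|, fun x => ?_⟩
  · rw [liftVJump, liftVJump, liftV_add_one, add_sub_right_comm, Int.ceil_add_one,
      add_sub_right_comm x, Int.ceil_add_one]
    push_cast; ring
  · have := abs_le.mp (abs_liftV_sub_self_le h x)
    rw [liftVJump, abs_le]
    constructor <;> linarith [Int.le_ceil (liftV h x - h), Int.ceil_lt_add_one (liftV h x - h),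
      Int.le_ceil (x - h), Int.ceil_lt_add_one (x - h)]

section Jump

variable {h x : ℝ}

theorem liftVJump_eq_one (h1 : h ≤ 1 / 2) (hx : x ∈ Ioo 0 h) : liftVJump h x = 1 := by
  obtain ⟨hx0, hxh⟩ := hx
  have hc : ⌈x - h⌉ = 0 := Int.ceil_eq_iff.mpr ⟨by norm_num; linarith, by norm_num; linarith⟩
  have hVc : ⌈liftV h x - h⌉ = 1 := by
    rw [liftV_of_lt_half hx0.le (by linarith), Int.ceil_eq_iff]
    constructor <;> norm_num <;> linarith
  simp [liftVJump, hc, hVc]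

theorem liftVJump_eq_neg_one (h1 : h ≤ 1 / 2) (hx : x ∈ Ioo (1 / 2) (1 / 2 + h)) :
    liftVJump h x = -1 := by
  obtain ⟨hx0, hxh⟩ := hx
  have hc : ⌈x - h⌉ = 1 := Int.ceil_eq_iff.mpr ⟨by norm_num; linarith, by norm_num; linarith⟩
  have hVc : ⌈liftV h x - h⌉ = 0 := by
    rw [liftV_of_half_le hx0.le (by linarith), Int.ceil_eq_iff]
    constructor <;> norm_num <;> linarith
  simp [liftVJump, hc, hVc]

theorem liftVJump_eq_zero (h0 : 0 ≤ h) (hx : x ∈ Ioo h (1 / 2) ∪ Ioo (1 / 2 + h) 1) :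
    liftVJump h x = 0 := by
  have hc : ⌈x - h⌉ = 1 := by
    rw [Int.ceil_eq_iff]
    rcases hx with ⟨hxl, hxr⟩ | ⟨hxl, hxr⟩ <;> constructor <;> norm_num <;> linarith
  have hVc : ⌈liftV h x - h⌉ = 1 := by
    rcases hx with ⟨hxl, hxr⟩ | ⟨hxl, hxr⟩
    · rw [liftV_of_lt_half (by linarith) hxr, Int.ceil_eq_iff]
      constructor <;> norm_num <;> linarith
    · rw [liftV_of_half_le (by linarith) hxr, Int.ceil_eq_iff]
      constructor <;> norm_num <;> linarith
  simp [liftVJump, hc, hVc]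

end Jump

theorem iterate_liftV_sub_self (h : ℝ) (n : ℕ) (x : ℝ) :
    (liftV h)^[n] x - x = birkhoffSum (liftV h) (liftVJump h) n x
      + (((liftV h)^[n] x - ⌈(liftV h)^[n] x - h⌉) - (x - ⌈x - h⌉)) := by
  have := birkhoffSum_coboundary (liftV h) (fun y => (⌈y - h⌉ : ℝ)) n x
  unfold liftVJump
  rw [this]
  ring

section Orthogonality

variable {h : ℝ}

theorem integral_liftVJump_mul (h0 : 0 ≤ h) (h1 : h ≤ 1 / 2) {F : ℝ → ℝ}
    (hF : IntervalIntegrable F volume 0 1) :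
    ∫ x in (0 : ℝ)..1, liftVJump h x * F x
      = (∫ x in (0 : ℝ)..h, F x) - ∫ x in (1 / 2)..(1 / 2 + h), F x := by
  have hg := isCircleObservable_liftVJump h
  obtain ⟨C, hC⟩ := hg.bounded
  have hgF : IntervalIntegrable (fun x => liftVJump h x * F x) volume 0 1 :=
    intervalIntegrable_iff.mpr ((intervalIntegrable_iff.mp hF).bdd_mul
      hg.measurable.aestronglyMeasurable
      (ae_of_all _ fun x => (Real.norm_eq_abs _).trans_le (hC x)))
  have hsub : ∀ a b : ℝ, a ∈ Icc 0 1 → b ∈ Icc 0 1 →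
      IntervalIntegrable (fun x => liftVJump h x * F x) volume a b := fun a b ha hb =>
    hgF.mono_set (by rw [uIcc_of_le zero_le_one]; exact uIcc_subset_Icc ha hb)
  have hh : h ∈ Icc (0 : ℝ) 1 := ⟨h0, by linarith⟩
  have hhalf : (1 / 2 : ℝ) ∈ Icc (0 : ℝ) 1 := ⟨by norm_num, by norm_num⟩
  have hhalfh : 1 / 2 + h ∈ Icc (0 : ℝ) 1 := ⟨by linarith, by linarith⟩
  have h01 : (0 : ℝ) ∈ Icc (0 : ℝ) 1 := ⟨le_rfl, zero_le_one⟩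
  have h11 : (1 : ℝ) ∈ Icc (0 : ℝ) 1 := ⟨zero_le_one, le_rfl⟩
  rw [← integral_add_adjacent_intervals (hsub 0 h h01 hh) (hsub h 1 hh h11),
    ← integral_add_adjacent_intervals (hsub h (1 / 2) hh hhalf) (hsub (1 / 2) 1 hhalf h11),
    ← integral_add_adjacent_intervals (hsub (1 / 2) (1 / 2 + h) hhalf hhalfh)
      (hsub (1 / 2 + h) 1 hhalfh h11)]
  have on_one : ∫ x in (0 : ℝ)..h, liftVJump h x * F x = ∫ x in (0 : ℝ)..h, F x :=
    integral_congr_Ioo_of_le h0 fun x hx => by simp only [liftVJump_eq_one h1 hx, one_mul]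
  have on_neg_one : ∫ x in (1 / 2 : ℝ)..(1 / 2 + h), liftVJump h x * F x
      = -∫ x in (1 / 2 : ℝ)..(1 / 2 + h), F x := by
    rw [← intervalIntegral.integral_neg]
    exact integral_congr_Ioo_of_le (by linarith) fun x hx => by
      simp only [liftVJump_eq_neg_one h1 hx, neg_one_mul]
  have on_zero : ∀ a b, Ioo a b ⊆ Ioo h (1 / 2) ∪ Ioo (1 / 2 + h) 1 → a ≤ b →
      ∫ x in a..b, liftVJump h x * F x = 0 := fun a b hab hle => by
    rw [← intervalIntegral.integral_zero (a := a) (b := b) (μ := volume) (E := ℝ)]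
    exact integral_congr_Ioo_of_le hle fun x hx => by
      simp only [liftVJump_eq_zero h0 (hab hx), zero_mul]
  rw [on_one, on_neg_one, on_zero h (1 / 2) subset_union_left h1,
    on_zero (1 / 2 + h) 1 subset_union_right (by linarith)]
  ring

theorem integral_liftVJump_sq (h0 : 0 ≤ h) (h1 : h ≤ 1 / 2) :
    ∫ x in (0 : ℝ)..1, liftVJump h x ^ 2 = 2 * h := by
  simp_rw [pow_two]
  rw [integral_liftVJump_mul h0 h1 ((isCircleObservable_liftVJump h).intervalIntegrable 0 1),
    integral_congr_Ioo_of_le h0 (g := fun _ => 1) fun x hx => liftVJump_eq_one h1 hx,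
    integral_congr_Ioo_of_le (by linarith) (g := fun _ => -1) fun x hx =>
      liftVJump_eq_neg_one h1 hx]
  simp only [intervalIntegral.integral_const, smul_eq_mul]
  ring

theorem integral_liftVJump_mul_comp_liftV (h0 : 0 ≤ h) (h1 : h ≤ 1 / 2) {u : ℝ → ℝ}
    (hu : IsCircleObservable u) : ∫ x in (0 : ℝ)..1, liftVJump h x * u (liftV h x) = 0 := by
  have shift : ∫ x in (1 - h)..(1 + h), u x = ∫ x in -h..h, u x := by
    calc ∫ x in (1 - h)..(1 + h), u x = ∫ x in -h..h, u (x + 1) := by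
          rw [integral_comp_add_right]; congr 1 <;> ring
      _ = ∫ x in -h..h, u x := by simp only [hu.periodic _]
  have left : ∫ x in (0 : ℝ)..h, u (liftV h x) = (∫ x in -h..h, u x) / 2 := by
    rw [integral_congr_Ioo_of_le h0 (g := fun x => u (-2 * x + (1 + h))) fun x hx => by
        rw [liftV_of_lt_half hx.1.le (by linarith [hx.2])]; congr 1; ring,
      integral_comp_mul_add u (by norm_num), integral_symm, smul_eq_mul,
      show (-2 : ℝ) * 0 + (1 + h) = 1 + h by ring, show (-2 : ℝ) * h + (1 + h) = 1 - h by ring,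
      shift]
    ring
  have right : ∫ x in (1 / 2 : ℝ)..(1 / 2 + h), u (liftV h x) = (∫ x in -h..h, u x) / 2 := by
    rw [integral_congr_Ioo_of_le (by linarith) (g := fun x => u (2 * x + (-1 - h))) fun x hx => by
        rw [liftV_of_half_le hx.1.le (by linarith [hx.2])]; congr 1; ring,
      integral_comp_mul_add u (by norm_num), smul_eq_mul,
      show (2 : ℝ) * (1 / 2) + (-1 - h) = -h by ring,
      show (2 : ℝ) * (1 / 2 + h) + (-1 - h) = h by ring]
    ring
  rw [integral_liftVJump_mul h0 h1 ((hu.comp_liftV h).intervalIntegrable 0 1), left, right,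
    sub_self]

theorem integral_liftVJump_iterate_mul_iterate (h0 : 0 ≤ h) (h1 : h ≤ 1 / 2) (j k : ℕ) :
    ∫ x in (0 : ℝ)..1, liftVJump h ((liftV h)^[j] x) * liftVJump h ((liftV h)^[k] x)
      = if j = k then 2 * h else 0 := by
  wlog hjk : j ≤ k generalizing j k
  · simp_rw [mul_comm (liftVJump h ((liftV h)^[j] _)), eq_comm (a := j)]
    exact this k j (le_of_not_ge hjk)
  obtain ⟨m, rfl⟩ := Nat.exists_eq_add_of_le hjk
  have hg := isCircleObservable_liftVJump h
  simp_rw [add_comm j m, iterate_add_apply]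
  rw [integral_comp_iterate_liftV (hg.mul (hg.comp_iterate_liftV h m)) h j]
  cases m with
  | zero => simpa [← pow_two] using integral_liftVJump_sq h0 h1
  | succ m =>
    simp only [iterate_succ_apply, right_eq_add, Nat.add_one_ne_zero, if_false]
    exact integral_liftVJump_mul_comp_liftV h0 h1 (hg.comp_iterate_liftV h m)

theorem integral_birkhoffSum_liftVJump_sq (h0 : 0 ≤ h) (h1 : h ≤ 1 / 2) (n : ℕ) :
    ∫ x in (0 : ℝ)..1, birkhoffSum (liftV h) (liftVJump h) n x ^ 2 = 2 * h * n := by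
  have hg := isCircleObservable_liftVJump h
  have hprod : ∀ j k, IntervalIntegrable
      (fun x => liftVJump h ((liftV h)^[j] x) * liftVJump h ((liftV h)^[k] x)) volume 0 1 :=
    fun j k => ((hg.comp_iterate_liftV h j).mul (hg.comp_iterate_liftV h k)).intervalIntegrable 0 1
  simp_rw [birkhoffSum, pow_two, Finset.sum_mul_sum]
  rw [integral_finsetSum fun j _ => by
    simpa only [Finset.sum_fn] using IntervalIntegrable.sum (Finset.range n) fun k _ => hprod j k]
  simp_rw [integral_finsetSum fun k _ => hprod _ k, integral_liftVJump_iterate_mul_iterate h0 h1]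
  simp only [Finset.sum_ite_eq, Finset.sum_ite_mem, Finset.inter_self, Finset.sum_const,
    Finset.card_range, nsmul_eq_mul]
  ring

theorem abs_integral_sq_iterate_liftV_sub_le (h0 : 0 ≤ h) (h1 : h ≤ 1 / 2) (n : ℕ) :
    |(∫ x in (0 : ℝ)..1, ((liftV h)^[n] x - x) ^ 2) - 2 * h * n| ≤ (2 * h + 1) * √n + 2 := by
  have hS := (isCircleObservable_liftVJump h).birkhoffSum_liftV h n
  have hφ := isCircleObservable_sub_ceil_sub h
  have hR := (hφ.comp_iterate_liftV h n).sub hφ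
  have hRle : ∀ x, |((liftV h)^[n] x - ⌈(liftV h)^[n] x - h⌉) - (x - ⌈x - h⌉)| ≤ 1 := fun x => by
    obtain ⟨hy₁, hy₂⟩ := sub_ceil_sub_mem_Ioc h ((liftV h)^[n] x)
    obtain ⟨hx₁, hx₂⟩ := sub_ceil_sub_mem_Ioc h x
    rw [abs_le]; constructor <;> linarith
  have hs : 0 < √n + 1 := by positivity
  have key := abs_integral_add_sq_sub_le zero_le_one (hS.sq.intervalIntegrable 0 1)
    ((hS.add hR).sq.intervalIntegrable 0 1) hRle hs
  rw [integral_birkhoffSum_liftVJump_sq h0 h1] at key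
  simp_rw [iterate_liftV_sub_self h n]
  have hdiv : 2 * h * n / (√n + 1) ≤ 2 * h * √n := by
    rw [div_le_iff₀ hs]
    nlinarith [Real.sq_sqrt (Nat.cast_nonneg (α := ℝ) n), Real.sqrt_nonneg n]
  linarith

end Orthogonality

theorem stmt14 (h : ℝ) (hh : h ∈ Set.Icc (0:ℝ) (1/2)) :
    Tendsto (fun n : ℕ => (1/(2*(n:ℝ))) * ∫ x in (0:ℝ)..1, ((liftV h)^[n] x - x)^2)
      atTop (nhds h) := by
  obtain ⟨h0, h1⟩ := hh
  have hlim := (tendsto_div_natCast_of_abs_sub_le_sqrt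
    (abs_integral_sq_iterate_liftV_sub_le h0 h1)).div_const 2
  convert hlim using 2 with n <;> ring
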